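/- For every n ≥ 1 and every p with 1 ≤ p < ∞, there exists an equilateral set of n+1 points in ℓ_p^n; hence e(ℓ_p^n) ≥ n+1. -/

import Mathlib

/-!
The unit vectors `e_i` are pairwise at distance `2^(1/p)`. The point `t • (1, …, 1)` is at
distance `(|1 - t|^p + (n - 1)|t|^p)^(1/p)` from every `e_i`, and by the intermediate value
theorem `t` can be chosen to make this `2^(1/p)` as well.
-/

open Finset

/-- The p-norm on `ℝ^n`. -/
noncomputable def pnorm (p : ℝ) {n : ℕ} (x : Fin n → ℝ) : ℝ :=
  (∑ i, |x i| ^ p) ^ (1 / p)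

/-- A set `S ⊆ ℝ^n` is equilateral with respect to the p-norm if there is `λ > 0`
with `‖x - y‖_p = λ` for all distinct `x, y ∈ S`. -/
def IsEquilateral (p : ℝ) {n : ℕ} (S : Set (Fin n → ℝ)) : Prop :=
  ∃ lam > 0, ∀ x ∈ S, ∀ y ∈ S, x ≠ y → pnorm p (x - y) = lam

variable {n : ℕ} {p : ℝ}

lemma exists_abs_one_sub_rpow_add_mul_abs_rpow_eq_two (hp : 0 < p) (m : ℕ) :
    ∃ t : ℝ, |1 - t| ^ p + m * |t| ^ p = 2 := by
  set f : ℝ → ℝ := fun t => |1 - t| ^ p + m * |t| ^ p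
  have hf : Continuous f := by fun_prop (disch := positivity)
  set T : ℝ := 1 + 2 ^ (1 / p)
  have hf0 : f 0 = 1 := by simp [f, Real.zero_rpow hp.ne']
  have hfT : 2 ≤ f T := by
    have : |1 - T| ^ p = 2 := by
      rw [show 1 - T = -2 ^ (1 / p) by ring, abs_neg, abs_of_pos (by positivity),
        ← Real.rpow_mul zero_le_two, one_div_mul_cancel hp.ne', Real.rpow_one]
    simp only [f, this]
    have : 0 ≤ (m : ℝ) * |T| ^ p := by positivity
    linarith
  obtain ⟨t, -, ht⟩ := intermediate_value_Icc (by positivity : (0 : ℝ) ≤ T) hf.continuousOn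
    (show (2 : ℝ) ∈ Set.Icc (f 0) (f T) by rw [hf0]; exact ⟨one_le_two, hfT⟩)
  exact ⟨t, ht⟩

lemma sum_abs_rpow_single_sub_single (hp : 0 < p) {i j : Fin n} (hij : i ≠ j) :
    ∑ k, |(Pi.single i 1 - Pi.single j 1 : Fin n → ℝ) k| ^ p = 2 := by
  rw [sum_eq_add i j hij (fun k _ hk => by simp [hk.1, hk.2, Real.zero_rpow hp.ne'])
    (by simp) (by simp)]
  norm_num [hij, hij.symm]

lemma sum_abs_rpow_single_sub_const (i : Fin n) (t : ℝ) :
    ∑ k, |(Pi.single i 1 - fun _ => t : Fin n → ℝ) k| ^ p =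
      |1 - t| ^ p + (n - 1 : ℕ) * |t| ^ p := by
  rw [← add_sum_erase _ _ (mem_univ i), sum_congr rfl (fun k hk => by
    rw [Pi.sub_apply, Pi.single_eq_of_ne (ne_of_mem_erase hk), zero_sub, abs_neg]),
    sum_const, card_erase_of_mem (mem_univ i), card_univ, Fintype.card_fin, nsmul_eq_mul]
  simp

def simplexVertex (t : ℝ) : Option (Fin n) → Fin n → ℝ
  | none => fun _ => t
  | some i => Pi.single i 1

lemma sum_abs_rpow_simplexVertex_sub (hp : 0 < p) {t : ℝ}
    (ht : |1 - t| ^ p + (n - 1 : ℕ) * |t| ^ p = 2) {a b : Option (Fin n)} (hab : a ≠ b) :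
    ∑ k, |(simplexVertex t a - simplexVertex t b) k| ^ p = 2 := by
  rcases a with _ | i <;> rcases b with _ | j
  · exact (hab rfl).elim
  · rw [← ht, ← sum_abs_rpow_single_sub_const j t]
    exact sum_congr rfl fun k _ => congrArg (· ^ p) (abs_sub_comm _ _)
  · exact (sum_abs_rpow_single_sub_const i t).trans ht
  · exact sum_abs_rpow_single_sub_single hp (by simpa using hab)

section

variable {ι : Type*} {f : ι → Fin n → ℝ} {c : ℝ}

lemma injective_of_sum_abs_rpow_sub_eq (hp : p ≠ 0) (hc : c ≠ 0)
    (h : ∀ a b, a ≠ b → ∑ k, |(f a - f b) k| ^ p = c) : Function.Injective f := by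
  intro a b hab
  by_contra hne
  apply hc
  simp [← h a b hne, hab, Real.zero_rpow hp]

lemma isEquilateral_range_of_sum_abs_rpow_sub_eq (hc : 0 < c)
    (h : ∀ a b, a ≠ b → ∑ k, |(f a - f b) k| ^ p = c) : IsEquilateral p (Set.range f) := by
  refine ⟨c ^ (1 / p), by positivity, ?_⟩
  rintro _ ⟨a, rfl⟩ _ ⟨b, rfl⟩ hab
  rw [pnorm, h a b (ne_of_apply_ne f hab)]

end

theorem stmt8_general (n : ℕ) (p : ℝ) (hp : 1 ≤ p) :
    ∃ S : Finset (Fin n → ℝ), S.card = n + 1 ∧ IsEquilateral p (S : Set (Fin n → ℝ)) := by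
  have hp0 : 0 < p := by linarith
  obtain ⟨t, ht⟩ := exists_abs_one_sub_rpow_add_mul_abs_rpow_eq_two hp0 (n - 1)
  have hdist : ∀ a b, a ≠ b → _ := fun _ _ hab => sum_abs_rpow_simplexVertex_sub hp0 ht hab
  refine ⟨univ.image (simplexVertex t), ?_, ?_⟩
  · rw [card_image_of_injective _ (injective_of_sum_abs_rpow_sub_eq hp0.ne' two_ne_zero hdist),
      card_univ, Fintype.card_option, Fintype.card_fin]
  · rw [coe_image, coe_univ, Set.image_univ]
    exact isEquilateral_range_of_sum_abs_rpow_sub_eq two_pos hdist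

/-- For every `n ≥ 1` and every `1 ≤ p < ∞`, there is an equilateral set of `n + 1`
points in `ℓ_p^n`; hence `e(ℓ_p^n) ≥ n + 1`. -/
theorem stmt8 (n : ℕ) (hn : 1 ≤ n) (p : ℝ) (hp : 1 ≤ p) :
    ∃ S : Finset (Fin n → ℝ), S.card = n + 1 ∧ IsEquilateral p (S : Set (Fin n → ℝ)) :=
  stmt8_general n p hp
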